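/- Suppose θ_1 ≥ θ_2 ≥ ⋯ ≥ θ_N > 0, u_i > 0 for all i, and let f : ℕ → ℝ be non-decreasing and non-negative. For a download-count state d ∈ ℕ^N let the utilities be u_i + f(d_i), let λ*(d) be the optimal CMLAPP value at state d, and let (S*(d),σ*(d)) be an optimal CMLAPP solution at state d. Define recursively V_0(d) = 0 and, for T ≥ 1, V_T(d) = Σ_{j∈S*(d)} P_j(S*(d),σ*(d),d) · (r_j + V_{T−1}(d[j ← d_j + 1])) + P_0(S*(d),σ*(d),d) · V_{T−1}(d), the expected total profit of the policy applying an optimal CMLAPP solution at every step under social influence. Then for every state d and T ≥ 0, V_T(d) ≥ T · λ*(d). In particular, since any policy under which the utilities remain fixed at their initial values earns at most λ*(d) in expectation per step and hence at most T·λ*(d) in total, the policy applying the optimal CMLAPP solution at each step under social influence outperforms in expectation any policy not using social influence. -/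

import Mathlib

/-- Expected profit `U(S,σ)` for utilities `w`. -/
noncomputable def expProfit {N : ℕ} (w r θ : Fin N → ℝ)
    (S : Finset (Fin N)) (σ : Fin N → Fin N) : ℝ :=
  ∑ i ∈ S, r i * (θ (σ i) * w i / (∑ j ∈ S, θ (σ j) * w j + 1))

/-- Choice probability `P_i(S,σ)` for utilities `w`. -/
noncomputable def choiceProb {N : ℕ} (w θ : Fin N → ℝ)
    (S : Finset (Fin N)) (σ : Fin N → Fin N) (i : Fin N) : ℝ :=
  θ (σ i) * w i / (∑ j ∈ S, θ (σ j) * w j + 1)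

/-- No-purchase probability `P_0(S,σ)` for utilities `w`. -/
noncomputable def noPurchase {N : ℕ} (w θ : Fin N → ℝ)
    (S : Finset (Fin N)) (σ : Fin N → Fin N) : ℝ :=
  1 / (∑ j ∈ S, θ (σ j) * w j + 1)

/-!
Write `a_i = θ_{σ(i)} (u_i + f(d_i))` for the attraction weights, so that `U = Σ a_i r_i / (Σ a_i + 1)`.
Then `λ ≤ U` iff `λ ≤ Σ a_i (r_i - λ)`. Applied to `λ = λ*(d)`, optimality against `S* \ {j}` forces
`r_j ≥ λ*(d)` for every `j ∈ S*(d)`; hence raising the weights of `S*(d)`, which is all a download does,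
cannot lower the profit of `(S*(d), σ*(d))`, and `λ*` never decreases along the process.
Induction on `T` then gives `V_{T+1}(d) ≥ λ*(d) + T λ*(d)`, since the choice probabilities sum to one
and average the `r_j` to `λ*(d)`.
-/

open Finset

section MultinomialLogit

variable {N : ℕ} {w w' r θ : Fin N → ℝ} {S : Finset (Fin N)} {σ : Fin N → Fin N}

theorem sum_attraction_add_one_pos (ha : ∀ i ∈ S, 0 ≤ θ (σ i) * w i) :
    0 < ∑ i ∈ S, θ (σ i) * w i + 1 := by
  linarith [sum_nonneg ha]

theorem expProfit_eq_div (w r θ : Fin N → ℝ) (S : Finset (Fin N)) (σ : Fin N → Fin N) :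
    expProfit w r θ S σ = (∑ i ∈ S, θ (σ i) * w i * r i) / (∑ i ∈ S, θ (σ i) * w i + 1) := by
  rw [expProfit, sum_div]
  exact sum_congr rfl fun i _ => by ring

theorem sum_attraction_mul_sub (w r θ : Fin N → ℝ) (S : Finset (Fin N)) (σ : Fin N → Fin N)
    (l : ℝ) : ∑ i ∈ S, θ (σ i) * w i * (r i - l) =
      ∑ i ∈ S, θ (σ i) * w i * r i - l * ∑ i ∈ S, θ (σ i) * w i := by
  rw [mul_sum, ← sum_sub_distrib]
  exact sum_congr rfl fun i _ => by ring

theorem le_expProfit_iff (ha : ∀ i ∈ S, 0 ≤ θ (σ i) * w i) {l : ℝ} :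
    l ≤ expProfit w r θ S σ ↔ l ≤ ∑ i ∈ S, θ (σ i) * w i * (r i - l) := by
  rw [expProfit_eq_div, le_div_iff₀ (sum_attraction_add_one_pos ha), sum_attraction_mul_sub]
  constructor <;> intro h <;> linarith

theorem expProfit_le_iff (ha : ∀ i ∈ S, 0 ≤ θ (σ i) * w i) {l : ℝ} :
    expProfit w r θ S σ ≤ l ↔ ∑ i ∈ S, θ (σ i) * w i * (r i - l) ≤ l := by
  rw [expProfit_eq_div, div_le_iff₀ (sum_attraction_add_one_pos ha), sum_attraction_mul_sub]
  constructor <;> intro h <;> linarith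

theorem expProfit_le_of_erase_le {j : Fin N} (hj : j ∈ S)
    (ha : ∀ i ∈ S, 0 ≤ θ (σ i) * w i) (haj : 0 < θ (σ j) * w j)
    (h : expProfit w r θ (S.erase j) σ ≤ expProfit w r θ S σ) :
    expProfit w r θ S σ ≤ r j := by
  set l := expProfit w r θ S σ
  have hS : l ≤ ∑ i ∈ S, θ (σ i) * w i * (r i - l) := (le_expProfit_iff ha).1 le_rfl
  have hSj : ∑ i ∈ S.erase j, θ (σ i) * w i * (r i - l) ≤ l :=
    (expProfit_le_iff fun i hi => ha i (mem_of_mem_erase hi)).1 h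
  rw [← add_sum_erase S _ hj] at hS
  by_contra! hlt
  linarith [mul_neg_of_pos_of_neg haj (sub_neg.2 hlt)]

theorem expProfit_le_expProfit_of_le (ha : ∀ i ∈ S, 0 ≤ θ (σ i) * w i)
    (haa' : ∀ i ∈ S, θ (σ i) * w i ≤ θ (σ i) * w' i)
    (hr : ∀ i ∈ S, expProfit w r θ S σ ≤ r i) :
    expProfit w r θ S σ ≤ expProfit w' r θ S σ := by
  set l := expProfit w r θ S σ
  have ha' : ∀ i ∈ S, 0 ≤ θ (σ i) * w' i := fun i hi => (ha i hi).trans (haa' i hi)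
  refine (le_expProfit_iff ha').2 (((le_expProfit_iff ha).1 le_rfl).trans ?_)
  exact sum_le_sum fun i hi => mul_le_mul_of_nonneg_right (haa' i hi) (sub_nonneg.2 (hr i hi))

theorem sum_choiceProb_add_noPurchase (ha : ∀ i ∈ S, 0 ≤ θ (σ i) * w i) :
    ∑ j ∈ S, choiceProb w θ S σ j + noPurchase w θ S σ = 1 := by
  unfold choiceProb noPurchase
  rw [← sum_div, ← add_div, div_self (sum_attraction_add_one_pos ha).ne']

theorem sum_choiceProb_mul_eq_expProfit :
    ∑ j ∈ S, choiceProb w θ S σ j * r j = expProfit w r θ S σ :=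
  sum_congr rfl fun _ _ => mul_comm _ _

theorem add_expProfit_le_sum_choiceProb (ha : ∀ i ∈ S, 0 ≤ θ (σ i) * w i)
    {m y : ℝ} {x : Fin N → ℝ} (hx : ∀ j ∈ S, m ≤ x j) (hy : m ≤ y) :
    m + expProfit w r θ S σ ≤
      ∑ j ∈ S, choiceProb w θ S σ j * (r j + x j) + noPurchase w θ S σ * y := by
  have hD := sum_attraction_add_one_pos ha
  calc m + expProfit w r θ S σ
      = ∑ j ∈ S, choiceProb w θ S σ j * (r j + m) + noPurchase w θ S σ * m := by
        rw [← sum_choiceProb_mul_eq_expProfit]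
        simp only [mul_add, sum_add_distrib, ← sum_mul]
        linear_combination (-m) * sum_choiceProb_add_noPurchase ha
    _ ≤ ∑ j ∈ S, choiceProb w θ S σ j * (r j + x j) + noPurchase w θ S σ * y := by
        gcongr with j hj
        · exact div_nonneg (ha j hj) hD.le
        · exact hx j hj
        · exact div_nonneg zero_le_one hD.le

end MultinomialLogit

theorem optimal_policy_with_social_influence_general (N c : ℕ)
    (u r θ : Fin N → ℝ)
    (hu : ∀ i, 0 < u i) (hθpos : ∀ i, 0 < θ i)
    (f : ℕ → ℝ) (hf0 : ∀ n, 0 ≤ f n) (hf : Monotone f)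
    (Sstar : (Fin N → ℕ) → Finset (Fin N))
    (σstar : (Fin N → ℕ) → (Fin N → Fin N))
    (lamStar : (Fin N → ℕ) → ℝ)
    (hfeas : ∀ d : Fin N → ℕ, (Sstar d).card ≤ c ∧ Set.InjOn (σstar d) ↑(Sstar d))
    (hval : ∀ d : Fin N → ℕ,
      lamStar d = expProfit (fun i => u i + f (d i)) r θ (Sstar d) (σstar d))
    (hopt : ∀ d : Fin N → ℕ,
      IsGreatest {z : ℝ | ∃ (S : Finset (Fin N)) (σ : Fin N → Fin N),
        S.card ≤ c ∧ Set.InjOn σ ↑S ∧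
        z = expProfit (fun i => u i + f (d i)) r θ S σ} (lamStar d))
    (V : ℕ → (Fin N → ℕ) → ℝ)
    (hV0 : ∀ d : Fin N → ℕ, V 0 d = 0)
    (hVrec : ∀ (T : ℕ) (d : Fin N → ℕ), V (T + 1) d =
      (∑ j ∈ Sstar d, choiceProb (fun i => u i + f (d i)) θ (Sstar d) (σstar d) j *
        (r j + V T (Function.update d j (d j + 1))))
      + noPurchase (fun i => u i + f (d i)) θ (Sstar d) (σstar d) * V T d) :
    ∀ (T : ℕ) (d : Fin N → ℕ), (T : ℝ) * lamStar d ≤ V T d := by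
  have ha : ∀ (d : Fin N → ℕ) (i : Fin N), 0 < θ (σstar d i) * (u i + f (d i)) :=
    fun d i => mul_pos (hθpos _) (add_pos_of_pos_of_nonneg (hu i) (hf0 _))
  have hprofit : ∀ d, ∀ j ∈ Sstar d, lamStar d ≤ r j := fun d j hj => by
    rw [hval d]
    refine expProfit_le_of_erase_le hj (fun i _ => (ha d i).le) (ha d j) ?_
    rw [← hval d]
    exact (hopt d).2 ⟨_, σstar d, (card_erase_le).trans (hfeas d).1,
      (hfeas d).2.mono (coe_subset.2 (erase_subset j _)), rfl⟩
  have hdownload : ∀ d, ∀ j ∈ Sstar d, lamStar d ≤ lamStar (Function.update d j (d j + 1)) :=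
    fun d j hj => by
      refine le_trans ?_ ((hopt _).2 ⟨Sstar d, σstar d, (hfeas d).1, (hfeas d).2, rfl⟩)
      rw [hval d]
      refine expProfit_le_expProfit_of_le (fun i _ => (ha d i).le) (fun i _ => ?_)
        (by rw [← hval d]; exact hprofit d)
      have hd : d ≤ Function.update d j (d j + 1) := le_update_self_iff.2 (Nat.le_succ _)
      exact mul_le_mul_of_nonneg_left ((add_le_add_iff_left _).2 (hf (hd i))) (hθpos _).le
  intro T
  induction T with
  | zero => simp [hV0]
  | succ T ih =>
    intro d
    have hnext : ∀ j ∈ Sstar d, T * lamStar d ≤ V T (Function.update d j (d j + 1)) :=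
      fun j hj => (mul_le_mul_of_nonneg_left (hdownload d j hj) T.cast_nonneg).trans (ih _)
    have hstep := add_expProfit_le_sum_choiceProb (r := r) (fun i _ => (ha d i).le) hnext (ih d)
    rw [← hval d] at hstep
    rw [hVrec]
    push_cast
    linarith

/-- under social influence, the policy applying an optimal CMLAPP
solution at every step earns, over `T` steps from state `d`, an expected total
profit `V_T(d)` of at least `T · λ*(d)`; hence it outperforms in expectation any
policy not using social influence (which earns at most `λ*(d)` per step in
expectation, so at most `T · λ*(d)` in total). -/
theorem optimal_policy_with_social_influence (N c : ℕ) (hc : c ≤ N)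
    (u r θ : Fin N → ℝ)
    (hu : ∀ i, 0 < u i) (hθpos : ∀ i, 0 < θ i)
    (hθ : ∀ i j : Fin N, i ≤ j → θ j ≤ θ i)
    (f : ℕ → ℝ) (hf0 : ∀ n, 0 ≤ f n) (hf : Monotone f)
    (Sstar : (Fin N → ℕ) → Finset (Fin N))
    (σstar : (Fin N → ℕ) → (Fin N → Fin N))
    (lamStar : (Fin N → ℕ) → ℝ)
    (hfeas : ∀ d : Fin N → ℕ, (Sstar d).card ≤ c ∧ Set.InjOn (σstar d) ↑(Sstar d))
    (hval : ∀ d : Fin N → ℕ,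
      lamStar d = expProfit (fun i => u i + f (d i)) r θ (Sstar d) (σstar d))
    (hopt : ∀ d : Fin N → ℕ,
      IsGreatest {z : ℝ | ∃ (S : Finset (Fin N)) (σ : Fin N → Fin N),
        S.card ≤ c ∧ Set.InjOn σ ↑S ∧
        z = expProfit (fun i => u i + f (d i)) r θ S σ} (lamStar d))
    (V : ℕ → (Fin N → ℕ) → ℝ)
    (hV0 : ∀ d : Fin N → ℕ, V 0 d = 0)
    (hVrec : ∀ (T : ℕ) (d : Fin N → ℕ), V (T + 1) d =
      (∑ j ∈ Sstar d, choiceProb (fun i => u i + f (d i)) θ (Sstar d) (σstar d) j *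
        (r j + V T (Function.update d j (d j + 1))))
      + noPurchase (fun i => u i + f (d i)) θ (Sstar d) (σstar d) * V T d) :
    ∀ (T : ℕ) (d : Fin N → ℕ), (T : ℝ) * lamStar d ≤ V T d :=
  optimal_policy_with_social_influence_general N c u r θ hu hθpos f hf0 hf Sstar σstar lamStar hfeas
    hval hopt V hV0 hVrec
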